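/- arXiv:1411.2652 — 3 statements merged into one kernel-verified Lean document; each statement's English description precedes it below -/
import Mathlib

section
/- Let n ≥ 2, let C be a crumpled n-cube, let Bⁿ denote the closed unit ball in ℝⁿ with boundary sphere S^{n−1}, and let h : Bd C → S^{n−1} be any homeomorphism. Then there exists a continuous map f : C → Bⁿ with f|_{Bd C} = h and f⁻¹(S^{n−1}) = Bd C; in particular (C, Bⁿ, h) ∈ W_n. (Theorem 3.1) -/
/-!
Since `C` is metrizable it is perfectly normal, so `Bd C` is the exact zero set of some
`φ : C → [0, 1]`. Extend `h` by Tietze to `G : C → Bⁿ` (the closed ball is a Tietze extension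
space); then `f = (1 - φ) • G` still extends `h`, and `‖f x‖ < 1` off `Bd C` because `φ x > 0`
there.
-/

noncomputable section

open Metric Set unitInterval

/-- The ambient Euclidean space `ℝ^{n+1}` in which the sphere `S^n` lives. -/
abbrev Amb (n : ℕ) := EuclideanSpace ℝ (Fin (n + 1))

/-- The unit sphere `S^n` inside `ℝ^{n+1}`. -/
def Sph (n : ℕ) : Set (Amb n) := Metric.sphere 0 1

/-- A crumpled `n`-cube: the union of the image `bd` of a topological embedding of the
sphere `S^{n-1}` into `S^n` together with one of the connected components `int` of
`S^n \ bd`. -/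
structure CrumpledCube (n : ℕ) where
  bd : Set (Amb n)
  int : Set (Amb n)
  bd_subset_sphere : bd ⊆ Sph n
  exists_embedding : ∃ e : ↥(Sph (n - 1)) → Amb n,
      Continuous e ∧ Function.Injective e ∧ Set.range e = bd
  int_component : ∃ x, x ∈ Sph n \ bd ∧ int = connectedComponentIn (Sph n \ bd) x

namespace CrumpledCube

/-- The underlying set of a crumpled cube. -/
def carrier {n : ℕ} (C : CrumpledCube n) : Set (Amb n) := C.bd ∪ C.int

lemma bd_subset_carrier {n : ℕ} (C : CrumpledCube n) : C.bd ⊆ C.carrier :=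
  Set.subset_union_left

end CrumpledCube

/-- `f : C → D` is a map associated with the triple `(C, D, h)`: it is continuous,
restricts to `h` on `Bd C`, and satisfies `f⁻¹(Bd D) = Bd C`. -/
def IsAssociatedMap {n : ℕ} (C D : CrumpledCube n) (h : ↥C.bd ≃ₜ ↥D.bd)
    (f : ↥C.carrier → ↥D.carrier) : Prop :=
  Continuous f ∧
    (∀ (x : ↥C.carrier) (hx : (x : Amb n) ∈ C.bd),
      ((f x : ↥D.carrier) : Amb n) = ((h ⟨(x : Amb n), hx⟩ : ↥D.bd) : Amb n)) ∧
    (∀ x : ↥C.carrier, ((f x : ↥D.carrier) : Amb n) ∈ D.bd ↔ (x : Amb n) ∈ C.bd)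

/-- The triple `(C, D, h)` belongs to the collection `𝒲_n`. -/
def MemW {n : ℕ} (C D : CrumpledCube n) (h : ↥C.bd ≃ₜ ↥D.bd) : Prop :=
  ∃ f : ↥C.carrier → ↥D.carrier, IsAssociatedMap C D h f

/-- The image `h(T)` of a subset `T` of `Bd C` under a boundary homeomorphism
`h : Bd C → Bd D`, as a subset of the ambient space. -/
def bdImage {n : ℕ} {C D : CrumpledCube n} (h : ↥C.bd ≃ₜ ↥D.bd) (T : Set (Amb n)) :
    Set (Amb n) :=
  (fun x : ↥C.bd => ((h x : ↥D.bd) : Amb n)) '' {x : ↥C.bd | (x : Amb n) ∈ T}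

/-- `T` is a homotopy taming set for the crumpled cube `C`. -/
def IsHomotopyTamingSet {n : ℕ} (C : CrumpledCube n) (T : Set (Amb n)) : Prop :=
  T ⊆ C.bd ∧
    ∀ (m : C(I × I, ↥C.carrier)) (ε : ℝ), 0 < ε →
      ∃ m' : C(I × I, ↥C.carrier),
        (∀ x, dist (m x) (m' x) < ε) ∧ ∀ x, ((m' x : ↥C.carrier) : Amb n) ∈ T ∪ C.int

/-- `Bd C` is locally collared in `C` at the point `p`. -/
def LocallyCollaredAt {n : ℕ} (C : CrumpledCube n) (p : ↥C.carrier) : Prop :=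
  ∃ N : Set ↥C.carrier, IsOpen N ∧ p ∈ N ∧
    ∃ φ : ↥N ≃ₜ ↥(N ∩ {x : ↥C.carrier | (x : Amb n) ∈ C.bd}) × ↥(Set.Ico (0 : ℝ) 1),
      ∀ (x : ↥N) (hx : ((x : ↥C.carrier) : Amb n) ∈ C.bd),
        φ x = (⟨(x : ↥C.carrier), ⟨x.2, hx⟩⟩, ⟨0, ⟨le_rfl, zero_lt_one⟩⟩)

/-- The wild set of a crumpled cube: the points of `Bd C` at which `Bd C` fails to be
locally collared in `C`. -/
def wildSet {n : ℕ} (C : CrumpledCube n) : Set (Amb n) :=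
  {p | ∃ hp : p ∈ C.bd, ¬ LocallyCollaredAt C ⟨p, C.bd_subset_carrier hp⟩}

/-- `C` is strictly wilder than `D`. -/
def StrictlyWilder {n : ℕ} (C D : CrumpledCube n) : Prop :=
  (∃ h : ↥C.bd ≃ₜ ↥D.bd, MemW C D h) ∧ ∀ H : ↥D.bd ≃ₜ ↥C.bd, ¬ MemW D C H

/-- A crumpled `n`-cube is a closed `n`-cell-complement if the complement of its
interior in `S^n` is an `n`-cell. -/
def IsClosedCellComplement {n : ℕ} (C : CrumpledCube n) : Prop :=
  Nonempty (↥(Sph n \ C.int) ≃ₜ ↥(Metric.closedBall (0 : EuclideanSpace ℝ (Fin n)) 1))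

lemma norm_smul_eq_one_iff_of_le_one {E : Type*} [NormedAddCommGroup E] [NormedSpace ℝ E]
    {t : ℝ} {v : E} (ht₀ : 0 ≤ t) (ht₁ : t ≤ 1) (hv : ‖v‖ ≤ 1) :
    ‖t • v‖ = 1 ↔ t = 1 ∧ ‖v‖ = 1 := by
  rw [norm_smul, Real.norm_of_nonneg ht₀]
  constructor
  · intro h
    constructor <;> nlinarith [norm_nonneg v]
  · rintro ⟨rfl, hv₁⟩
    rw [one_mul, hv₁]

theorem exists_extension_closedBall_preimage_sphere {X E : Type*} [TopologicalSpace X]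
    [PerfectlyNormalSpace X] [NormedAddCommGroup E] [NormedSpace ℝ E] [FiniteDimensional ℝ E]
    {S : Set X} (hS : IsClosed S) (g : C(S, sphere (0 : E) 1)) :
    ∃ f : C(X, closedBall (0 : E) 1),
      (∀ x : S, (f x : E) = g x) ∧ ∀ x, (f x : E) ∈ sphere (0 : E) 1 ↔ x ∈ S := by
  obtain ⟨φ, hφS, hφI⟩ :=
    perfectlyNormalSpace_iff_forall_isClosed_preimage_zero.mp ‹_› S hS
  let g' : C(S, closedBall (0 : E) 1) :=
    ⟨fun x => ⟨g x, sphere_subset_closedBall (g x).2⟩, by fun_prop⟩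
  obtain ⟨G, hG⟩ := g'.exists_restrict_eq hS
  have hGS (x : S) : (G x : E) = g x := congrArg Subtype.val (DFunLike.congr_fun hG x)
  have hG_le (x : X) : ‖(G x : E)‖ ≤ 1 := mem_closedBall_zero_iff.mp (G x).2
  have hφ₀ (x : X) : 0 ≤ 1 - φ x := by linarith [(hφI x).2]
  have hφ₁ (x : X) : 1 - φ x ≤ 1 := by linarith [(hφI x).1]
  have hφ_eq_zero (x : X) : φ x = 0 ↔ x ∈ S := by rw [hφS]; rfl
  have hf_le (x : X) : ‖(1 - φ x) • (G x : E)‖ ≤ 1 := by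
    rw [norm_smul, Real.norm_of_nonneg (hφ₀ x)]
    exact mul_le_one₀ (hφ₁ x) (norm_nonneg _) (hG_le x)
  let f : C(X, closedBall (0 : E) 1) :=
    ⟨fun x => ⟨(1 - φ x) • (G x : E), mem_closedBall_zero_iff.mpr (hf_le x)⟩, by fun_prop⟩
  refine ⟨f, fun x => ?_, fun x => ?_⟩
  · change (1 - φ x) • (G x : E) = g x
    rw [(hφ_eq_zero x).mpr x.2, sub_zero, one_smul, hGS]
  · change (1 - φ x) • (G x : E) ∈ sphere (0 : E) 1 ↔ x ∈ S
    rw [mem_sphere_zero_iff_norm, norm_smul_eq_one_iff_of_le_one (hφ₀ x) (hφ₁ x) (hG_le x)]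
    constructor
    · rintro ⟨hφ_one, -⟩
      exact (hφ_eq_zero x).mp (by linarith)
    · intro hx
      refine ⟨by rw [(hφ_eq_zero x).mpr hx, sub_zero], ?_⟩
      rw [hGS ⟨x, hx⟩]
      exact mem_sphere_zero_iff_norm.mp (g ⟨x, hx⟩).2

theorem stmt0_general (n : ℕ) (C : CrumpledCube n)
    (h : ↥C.bd ≃ₜ ↥(Metric.sphere (0 : EuclideanSpace ℝ (Fin n)) 1)) :
    ∃ f : ↥C.carrier → ↥(Metric.closedBall (0 : EuclideanSpace ℝ (Fin n)) 1),
      Continuous f ∧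
      (∀ (x : ↥C.carrier) (hx : (x : Amb n) ∈ C.bd),
        ((f x : ↥(Metric.closedBall (0 : EuclideanSpace ℝ (Fin n)) 1)) : EuclideanSpace ℝ (Fin n)) =
          ((h ⟨(x : Amb n), hx⟩) : EuclideanSpace ℝ (Fin n))) ∧
      (∀ x : ↥C.carrier,
        ((f x : ↥(Metric.closedBall (0 : EuclideanSpace ℝ (Fin n)) 1)) : EuclideanSpace ℝ (Fin n)) ∈
            Metric.sphere (0 : EuclideanSpace ℝ (Fin n)) 1 ↔ (x : Amb n) ∈ C.bd) := by
  obtain ⟨e, he_cont, -, he_range⟩ := C.exists_embedding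
  have : CompactSpace (Sph (n - 1)) := isCompact_iff_compactSpace.mp (isCompact_sphere _ _)
  have hbd : IsClosed {x : C.carrier | (x : Amb n) ∈ C.bd} :=
    (he_range ▸ isCompact_range he_cont).isClosed.preimage continuous_subtype_val
  let g : C({x : C.carrier | (x : Amb n) ∈ C.bd}, sphere (0 : EuclideanSpace ℝ (Fin n)) 1) :=
    ⟨fun x => h ⟨x.1.1, x.2⟩, by fun_prop⟩
  obtain ⟨f, hf_ext, hf_sphere⟩ := exists_extension_closedBall_preimage_sphere hbd g
  exact ⟨f, f.continuous, fun x hx => hf_ext ⟨x, hx⟩, hf_sphere⟩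

/-- **Theorem 3.1.** For every crumpled `n`-cube `C` (`n ≥ 2`) and every homeomorphism
`h : Bd C → S^{n-1} = Bd Bⁿ`, there is a continuous map `f : C → Bⁿ` extending `h`
with `f⁻¹(S^{n-1}) = Bd C`; that is, `(C, Bⁿ, h) ∈ 𝒲_n`. -/
theorem stmt0 (n : ℕ) (hn : 2 ≤ n) (C : CrumpledCube n)
    (h : ↥C.bd ≃ₜ ↥(Metric.sphere (0 : EuclideanSpace ℝ (Fin n)) 1)) :
    ∃ f : ↥C.carrier → ↥(Metric.closedBall (0 : EuclideanSpace ℝ (Fin n)) 1),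
      Continuous f ∧
      (∀ (x : ↥C.carrier) (hx : (x : Amb n) ∈ C.bd),
        ((f x : ↥(Metric.closedBall (0 : EuclideanSpace ℝ (Fin n)) 1)) : EuclideanSpace ℝ (Fin n)) =
          ((h ⟨(x : Amb n), hx⟩) : EuclideanSpace ℝ (Fin n))) ∧
      (∀ x : ↥C.carrier,
        ((f x : ↥(Metric.closedBall (0 : EuclideanSpace ℝ (Fin n)) 1)) : EuclideanSpace ℝ (Fin n)) ∈
            Metric.sphere (0 : EuclideanSpace ℝ (Fin n)) 1 ↔ (x : Amb n) ∈ C.bd) :=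
  stmt0_general n C h
end
end

section
/- Suppose (C,D,h) ∈ W_n. Then there exist crumpled (n+1)-cubes C′, D′ ⊆ S^{n+1} and homeomorphisms φ : Susp(C) → C′ and ψ : Susp(D) → D′ with φ(Susp(Bd C)) = Bd C′ and ψ(Susp(Bd D)) = Bd D′, such that the triple (C′, D′, h′) belongs to W_{n+1}, where h′ : Bd C′ → Bd D′ is the homeomorphism ψ ∘ Susp(h) ∘ (φ|_{Susp(Bd C)})⁻¹ induced by the suspension Susp(h) of h. (Theorem 4.1) -/
noncomputable section

open Metric Set unitInterval

/-- The identifications defining the unreduced suspension of `X`. -/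
def SuspRel (X : Type*) : X × I → X × I → Prop := fun a b =>
  a = b ∨ (a.2 = 0 ∧ b.2 = 0) ∨ (a.2 = 1 ∧ b.2 = 1)

/-- The unreduced suspension of a topological space. -/
def Susp (X : Type*) : Type _ := Quot (SuspRel X)

instance (X : Type*) [TopologicalSpace X] : TopologicalSpace (Susp X) :=
  inferInstanceAs (TopologicalSpace (Quot (SuspRel X)))

/-- The map induced on unreduced suspensions by a map `f : X → Y`. -/
def Susp.map {X Y : Type*} (f : X → Y) : Susp X → Susp Y :=
  Quot.map (fun a : X × I => (f a.1, a.2))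
    (fun a b hab => by
      rcases hab with h | h | h
      · exact Or.inl (by rw [h])
      · exact Or.inr (Or.inl h)
      · exact Or.inr (Or.inr h))


/-!
View `S^n` as the equator `{x_{n+1} = 0}` of `S^{n+1}` and realise the suspension of `A ⊆ S^n` as
the union `Σ A` of the meridian arcs from the south to the north pole through the points of `A`;
for compact `A` the evident map `Susp A → Σ A` is a homeomorphism. For a crumpled cube `C`, the
set `Σ (Bd C)` is the image of the suspended embedding of `S^{n-1}`, and the open arcs through
`Int C` form a component of `S^{n+1} \ Σ (Bd C)`: they are preconnected and, away from the poles,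
arcs correspond to points of `S^n`, so the set is relatively open and relatively closed because
`Int C` is. A point of an arc is in `Σ (Bd C)` iff it is a pole or the arc passes through `Bd C`,
so the suspension of a map associated with `(C, D, h)` is associated with the suspended triple.
-/

namespace Amb

variable {m : ℕ}

def snoc (x : Amb m) (s : ℝ) : Amb (m + 1) :=
  WithLp.toLp 2 (Fin.snoc (α := fun _ => ℝ) x.ofLp s)

def init (y : Amb (m + 1)) : Amb m := WithLp.toLp 2 (Fin.init y.ofLp)

def last (y : Amb (m + 1)) : ℝ := y (Fin.last (m + 1))

@[simp] lemma init_snoc (x : Amb m) (s : ℝ) : init (snoc x s) = x := by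
  simp [init, snoc]

@[simp] lemma last_snoc (x : Amb m) (s : ℝ) : last (snoc x s) = s := by
  simp [last, snoc]

@[simp] lemma snoc_init_last (y : Amb (m + 1)) : snoc (init y) (last y) = y := by
  simp [snoc, init, last]

lemma continuous_init : Continuous (init : Amb (m + 1) → Amb m) := by
  unfold init; fun_prop

lemma continuous_last : Continuous (last : Amb (m + 1) → ℝ) := by
  unfold last; fun_prop

lemma norm_snoc_sq (x : Amb m) (s : ℝ) : ‖snoc x s‖ ^ 2 = ‖x‖ ^ 2 + s ^ 2 := by
  simp [EuclideanSpace.norm_sq_eq, snoc, Fin.sum_univ_castSucc]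

lemma norm_sq_eq_init_last (y : Amb (m + 1)) : ‖y‖ ^ 2 = ‖init y‖ ^ 2 + last y ^ 2 := by
  rw [← norm_snoc_sq, snoc_init_last]

end Amb

section Meridian

variable {m : ℕ}

/-- The point at height `2t - 1` on the meridian arc of `S^{m+1}` through `x ∈ S^m`, where `S^m`
is the equator `{last = 0}`. For `t ∉ [0, 1]` the square root is junk. -/
def suspPt (x : Amb m) (t : ℝ) : Amb (m + 1) :=
  Amb.snoc (√(1 - (2 * t - 1) ^ 2) • x) (2 * t - 1)

/-- The inverse of `suspPt` away from the poles. -/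
def suspCoord (y : Amb (m + 1)) : Amb m × ℝ :=
  (‖Amb.init y‖⁻¹ • Amb.init y, (Amb.last y + 1) / 2)

lemma continuous_suspPt : Continuous fun p : Amb m × ℝ => suspPt p.1 p.2 := by
  unfold suspPt Amb.snoc
  fun_prop

lemma continuousOn_suspCoord : ContinuousOn (suspCoord (m := m)) {y | Amb.init y ≠ 0} := by
  have hinit := Amb.continuous_init (m := m)
  refine ContinuousOn.prodMk ?_
    ((Amb.continuous_last.add continuous_const).div_const 2).continuousOn
  exact ((hinit.norm.continuousOn).inv₀ fun y hy => norm_ne_zero_iff.mpr hy).smul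
    hinit.continuousOn

@[simp] lemma init_suspPt (x : Amb m) (t : ℝ) :
    Amb.init (suspPt x t) = √(1 - (2 * t - 1) ^ 2) • x :=
  Amb.init_snoc _ _

@[simp] lemma last_suspPt (x : Amb m) (t : ℝ) : Amb.last (suspPt x t) = 2 * t - 1 :=
  Amb.last_snoc _ _

lemma suspPt_zero (x : Amb m) : suspPt x 0 = Amb.snoc 0 (-1) := by
  norm_num [suspPt]

lemma suspPt_one (x : Amb m) : suspPt x 1 = Amb.snoc 0 1 := by
  norm_num [suspPt]

lemma sqrt_one_sub_sq_pos {t : ℝ} (ht : t ∈ Ioo (0 : ℝ) 1) : 0 < √(1 - (2 * t - 1) ^ 2) :=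
  Real.sqrt_pos.mpr (by nlinarith [ht.1, ht.2])

lemma norm_suspPt {x : Amb m} (hx : ‖x‖ = 1) {t : ℝ} (ht : t ∈ Icc (0 : ℝ) 1) :
    ‖suspPt x t‖ = 1 := by
  have hsq : ‖suspPt x t‖ ^ 2 = 1 := by
    rw [suspPt, Amb.norm_snoc_sq, norm_smul, mul_pow, hx, Real.norm_eq_abs, sq_abs,
      Real.sq_sqrt (by nlinarith [ht.1, ht.2])]
    ring
  nlinarith [norm_nonneg (suspPt x t)]

lemma eq_of_suspPt_eq {x x' : Amb m} {t t' : ℝ} (ht : t ∈ Icc (0 : ℝ) 1)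
    (h : suspPt x t = suspPt x' t') : t = t' ∧ (t = 0 ∨ t = 1 ∨ x = x') := by
  have htt' : t = t' := by
    have := congrArg Amb.last h
    simp only [last_suspPt] at this
    linarith
  subst htt'
  refine ⟨rfl, ?_⟩
  rcases ht.1.eq_or_lt with h0 | h0
  · exact Or.inl h0.symm
  rcases ht.2.eq_or_lt with h1 | h1
  · exact Or.inr (Or.inl h1)
  have := congrArg Amb.init h
  simp only [init_suspPt] at this
  exact Or.inr (Or.inr (smul_right_injective _ (sqrt_one_sub_sq_pos ⟨h0, h1⟩).ne' this))

lemma suspPt_suspCoord {y : Amb (m + 1)} (hy : ‖y‖ = 1) (h0 : Amb.init y ≠ 0) :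
    ‖(suspCoord y).1‖ = 1 ∧ (suspCoord y).2 ∈ Ioo (0 : ℝ) 1 ∧
      suspPt (suspCoord y).1 (suspCoord y).2 = y := by
  have hsum := Amb.norm_sq_eq_init_last y
  have hpos : 0 < ‖Amb.init y‖ := norm_pos_iff.mpr h0
  have hlast : Amb.last y ^ 2 < 1 := by nlinarith
  refine ⟨norm_smul_inv_norm h0, ⟨?_, ?_⟩, ?_⟩
  · show 0 < (Amb.last y + 1) / 2
    nlinarith
  · show (Amb.last y + 1) / 2 < 1
    nlinarith
  · have hr : √(1 - (2 * ((Amb.last y + 1) / 2) - 1) ^ 2) = ‖Amb.init y‖ := by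
      rw [show 1 - (2 * ((Amb.last y + 1) / 2) - 1) ^ 2 = ‖Amb.init y‖ ^ 2 by nlinarith,
        Real.sqrt_sq hpos.le]
    rw [suspCoord, suspPt, hr, smul_inv_smul₀ hpos.ne',
      show 2 * ((Amb.last y + 1) / 2) - 1 = Amb.last y by ring, Amb.snoc_init_last]

lemma suspPt_eq_of_init_eq_zero {y : Amb (m + 1)} (hy : ‖y‖ = 1) (h0 : Amb.init y = 0)
    (x : Amb m) : y = suspPt x 0 ∨ y = suspPt x 1 := by
  have hsum := Amb.norm_sq_eq_init_last y
  rw [hy, h0, norm_zero] at hsum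
  have hy' : y = Amb.snoc 0 (Amb.last y) := by rw [← h0, Amb.snoc_init_last]
  rw [suspPt_zero, suspPt_one, hy']
  have : (Amb.last y - 1) * (Amb.last y + 1) = 0 := by nlinarith
  rcases mul_eq_zero.mp this with h | h
  · exact Or.inr (by rw [show Amb.last y = 1 by linarith])
  · exact Or.inl (by rw [show Amb.last y = -1 by linarith])

end Meridian

section SuspSet

variable {m : ℕ}

def suspSet (A : Set (Amb m)) : Set (Amb (m + 1)) :=
  (fun p : Amb m × ℝ => suspPt p.1 p.2) '' (A ×ˢ Icc 0 1)

def openSuspSet (A : Set (Amb m)) : Set (Amb (m + 1)) :=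
  (fun p : Amb m × ℝ => suspPt p.1 p.2) '' (A ×ˢ Ioo 0 1)

lemma suspPt_mem_suspSet_iff {A : Set (Amb m)} (hA : A.Nonempty) {x : Amb m} {t : ℝ}
    (ht : t ∈ Icc (0 : ℝ) 1) : suspPt x t ∈ suspSet A ↔ t = 0 ∨ t = 1 ∨ x ∈ A := by
  constructor
  · rintro ⟨⟨a, s⟩, ⟨ha, hs⟩, heq⟩
    obtain ⟨rfl, hcases⟩ := eq_of_suspPt_eq hs heq
    rcases hcases with h | h | rfl
    exacts [Or.inl h, Or.inr (Or.inl h), Or.inr (Or.inr ha)]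
  · obtain ⟨a, ha⟩ := hA
    rintro (rfl | rfl | hx)
    · exact ⟨(a, 0), ⟨ha, by norm_num⟩, by simp only [suspPt_zero]⟩
    · exact ⟨(a, 1), ⟨ha, by norm_num⟩, by simp only [suspPt_one]⟩
    · exact ⟨(x, t), ⟨hx, ht⟩, rfl⟩

lemma suspSet_subset_sphere {A : Set (Amb m)} (hA : A ⊆ Sph m) : suspSet A ⊆ Sph (m + 1) := by
  rintro _ ⟨⟨x, t⟩, ⟨hx, ht⟩, rfl⟩
  simpa [Sph] using norm_suspPt (by simpa [Sph] using hA hx) ht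

lemma init_ne_zero_of_mem_sphere_diff {A : Set (Amb m)} (hA : A.Nonempty) {y : Amb (m + 1)}
    (hy : y ∈ Sph (m + 1) \ suspSet A) : Amb.init y ≠ 0 := by
  intro h0
  obtain ⟨a, ha⟩ := hA
  have hy1 : ‖y‖ = 1 := by simpa [Sph] using hy.1
  rcases suspPt_eq_of_init_eq_zero hy1 h0 a with rfl | rfl
  · exact hy.2 ⟨(a, 0), ⟨ha, by norm_num⟩, rfl⟩
  · exact hy.2 ⟨(a, 1), ⟨ha, by norm_num⟩, rfl⟩

lemma suspSet_sphere : suspSet (Sph m) = Sph (m + 1) := by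
  refine (suspSet_subset_sphere subset_rfl).antisymm fun y hy => ?_
  by_contra hy'
  have hy1 : ‖y‖ = 1 := by simpa [Sph] using hy
  obtain ⟨hx, ht, heq⟩ := suspPt_suspCoord hy1
    (init_ne_zero_of_mem_sphere_diff (NormedSpace.sphere_nonempty.mpr zero_le_one) ⟨hy, hy'⟩)
  exact hy' ⟨suspCoord y, ⟨by simpa [Sph] using hx, Ioo_subset_Icc_self ht⟩, heq⟩

lemma suspSet_union {A : Set (Amb m)} (hA : A.Nonempty) (B : Set (Amb m)) :
    suspSet (A ∪ B) = suspSet A ∪ openSuspSet B := by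
  refine Subset.antisymm ?_ (union_subset (image_mono (prod_mono subset_union_left subset_rfl))
    (image_mono (prod_mono subset_union_right Ioo_subset_Icc_self)))
  rintro _ ⟨⟨x, t⟩, ⟨hx | hx, ht⟩, rfl⟩
  · exact Or.inl ⟨(x, t), ⟨hx, ht⟩, rfl⟩
  · rcases ht.1.eq_or_lt with rfl | h0
    · exact Or.inl ((suspPt_mem_suspSet_iff hA ht).mpr (Or.inl rfl))
    rcases ht.2.eq_or_lt with rfl | h1
    · exact Or.inl ((suspPt_mem_suspSet_iff hA ht).mpr (Or.inr (Or.inl rfl)))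
    exact Or.inr ⟨(x, t), ⟨hx, h0, h1⟩, rfl⟩

end SuspSet

namespace Susp

variable {X Y Z : Type*}

lemma suspRel_equivalence : Equivalence (SuspRel X) where
  refl _ := Or.inl rfl
  symm := by
    rintro a b (h | h | h)
    exacts [Or.inl h.symm, Or.inr (Or.inl h.symm), Or.inr (Or.inr h.symm)]
  trans := by
    unfold SuspRel
    grind

lemma mk_eq_mk_iff {a b : X × I} :
    (Quot.mk (SuspRel X) a : Susp X) = Quot.mk _ b ↔ SuspRel X a b :=
  ⟨fun h => suspRel_equivalence.eqvGen_iff.mp (Quot.eqvGen_exact h), Quot.sound⟩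

@[simp] lemma map_mk (f : X → Y) (a : X × I) :
    Susp.map f (Quot.mk _ a) = Quot.mk _ (f a.1, a.2) := rfl

lemma map_map (f : X → Y) (g : Y → Z) (z : Susp X) :
    Susp.map g (Susp.map f z) = Susp.map (g ∘ f) z := by
  induction z using Quot.ind
  rfl

lemma map_id (z : Susp X) : Susp.map id z = z := by
  induction z using Quot.ind
  rfl

lemma map_injective {f : X → Y} (hf : Function.Injective f) :
    Function.Injective (Susp.map f) := by
  intro z z'
  induction z using Quot.ind with | mk a => ?_
  induction z' using Quot.ind with | mk b => ?_
  intro h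
  apply Quot.sound
  rcases mk_eq_mk_iff.mp h with h | h | h
  · obtain ⟨h1, h2⟩ := Prod.mk.inj h
    exact Or.inl (Prod.ext (hf h1) h2)
  exacts [Or.inr (Or.inl h), Or.inr (Or.inr h)]

lemma map_surjective {f : X → Y} (hf : Function.Surjective f) :
    Function.Surjective (Susp.map f) := by
  intro z
  induction z using Quot.ind with | mk b => ?_
  obtain ⟨a, ha⟩ := hf b.1
  exact ⟨Quot.mk _ (a, b.2), by rw [map_mk, ha]⟩

variable [TopologicalSpace X] [TopologicalSpace Y]

lemma continuous_map {f : X → Y} (hf : Continuous f) : Continuous (Susp.map f) :=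
  continuous_quot_lift _ (continuous_quot_mk.comp (by fun_prop))

instance [CompactSpace X] : CompactSpace (Susp X) :=
  Quot.mk_surjective.compactSpace continuous_quot_mk

end Susp

def Homeomorph.suspCongr {X Y : Type*} [TopologicalSpace X] [TopologicalSpace Y] (e : X ≃ₜ Y) :
    Susp X ≃ₜ Susp Y where
  toFun := Susp.map e
  invFun := Susp.map e.symm
  left_inv z := by rw [Susp.map_map, e.symm_comp_self, Susp.map_id]
  right_inv z := by rw [Susp.map_map, e.self_comp_symm, Susp.map_id]
  continuous_toFun := Susp.continuous_map e.continuous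
  continuous_invFun := Susp.continuous_map e.symm.continuous

section SuspHomeo

variable {m : ℕ}

def suspRealize (A : Set (Amb m)) : Susp A → Amb (m + 1) :=
  Quot.lift (fun p : A × I => suspPt (p.1 : Amb m) p.2) <| by
    rintro ⟨a, t⟩ ⟨b, s⟩ (h | ⟨ht, hs⟩ | ⟨ht, hs⟩)
    · rw [h]
    · simp only at ht hs
      simp only [ht, hs, Icc.coe_zero, suspPt_zero]
    · simp only at ht hs
      simp only [ht, hs, Icc.coe_one, suspPt_one]

lemma continuous_suspRealize (A : Set (Amb m)) : Continuous (suspRealize A) :=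
  continuous_quot_lift _ <|
    continuous_suspPt.comp (f := fun p : A × I => ((p.1 : Amb m), (p.2 : ℝ))) (by fun_prop)

lemma suspRealize_injective (A : Set (Amb m)) : Function.Injective (suspRealize A) := by
  intro z z'
  induction z using Quot.ind with | mk p => ?_
  induction z' using Quot.ind with | mk q => ?_
  intro h
  obtain ⟨htt, hcases⟩ := eq_of_suspPt_eq p.2.2 h
  apply Quot.sound
  rcases hcases with h0 | h1 | hx
  · exact Or.inr (Or.inl ⟨Subtype.ext h0, Subtype.ext (htt ▸ h0)⟩)
  · exact Or.inr (Or.inr ⟨Subtype.ext h1, Subtype.ext (htt ▸ h1)⟩)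
  · exact Or.inl (Prod.ext (Subtype.ext hx) (Subtype.ext htt))

lemma range_suspRealize (A : Set (Amb m)) : range (suspRealize A) = suspSet A := by
  ext y
  constructor
  · rintro ⟨z, rfl⟩
    induction z using Quot.ind with | mk p => ?_
    exact ⟨((p.1 : Amb m), (p.2 : ℝ)), ⟨p.1.2, p.2.2⟩, rfl⟩
  · rintro ⟨⟨x, t⟩, ⟨hx, ht⟩, rfl⟩
    exact ⟨Quot.mk _ (⟨x, hx⟩, ⟨t, ht⟩), rfl⟩

def suspHomeo (A : Set (Amb m)) (hA : IsCompact A) : Susp A ≃ₜ suspSet A :=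
  haveI := isCompact_iff_compactSpace.mp hA
  ((continuous_suspRealize A).isClosedEmbedding (suspRealize_injective A)).isEmbedding
    |>.toHomeomorph.trans (Homeomorph.setCongr (range_suspRealize A))

lemma suspRealize_map_inclusion {A B : Set (Amb m)} (hAB : A ⊆ B) (z : Susp A) :
    suspRealize B (Susp.map (inclusion hAB) z) = suspRealize A z := by
  induction z using Quot.ind
  rfl

end SuspHomeo

section Components

variable {α : Type*} [TopologicalSpace α]

lemma connectedComponentIn_eq_of_isPreconnected {F s U Z : Set α} {x : α}
    (hs : IsPreconnected s) (hsF : s ⊆ F) (hx : x ∈ s) (hU : IsOpen U) (hZ : IsClosed Z)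
    (hUs : U ∩ F = s) (hZs : Z ∩ F = s) : connectedComponentIn F x = s := by
  refine Subset.antisymm ?_ (hs.subset_connectedComponentIn hx hsF)
  have hclopen : IsClopen ((↑) ⁻¹' s : Set F) := by
    constructor
    · convert hZ.preimage continuous_subtype_val using 1
      ext y
      simp [← hZs]
    · convert hU.preimage continuous_subtype_val using 1
      ext y
      simp [← hUs]
  rw [connectedComponentIn_eq_image (hsF hx)]
  rintro _ ⟨y, hy, rfl⟩
  exact hclopen.connectedComponent_subset hx hy

lemma exists_isOpen_inter_eq_connectedComponentIn {F : Set α} [LocallyConnectedSpace F]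
    (x : α) : ∃ U, IsOpen U ∧ U ∩ F = connectedComponentIn F x := by
  by_cases hx : x ∈ F
  · obtain ⟨U, hU, hpre⟩ :=
      isOpen_induced_iff.mp (isOpen_connectedComponent (x := (⟨x, hx⟩ : F)))
    refine ⟨U, hU, ?_⟩
    rw [connectedComponentIn_eq_image hx, ← hpre, Subtype.image_preimage_coe, inter_comm]
  · exact ⟨∅, isOpen_empty, by rw [connectedComponentIn_eq_empty hx, empty_inter]⟩

lemma closure_connectedComponentIn_inter_subset (F : Set α) (x : α) :
    closure (connectedComponentIn F x) ∩ F ⊆ connectedComponentIn F x := by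
  by_cases hx : x ∈ F
  · have hpre : IsPreconnected
        (connectedComponentIn F x ∪ closure (connectedComponentIn F x) ∩ F) :=
      isPreconnected_connectedComponentIn.subset_closure subset_union_left
        (union_subset subset_closure inter_subset_left)
    exact fun y hy => hpre.subset_connectedComponentIn (Or.inl (mem_connectedComponentIn hx))
      (union_subset (connectedComponentIn_subset F x) inter_subset_right) (Or.inr hy)
  · simp [connectedComponentIn_eq_empty hx]

end Components

instance (n : ℕ) : LocallyConnectedSpace (Sph n) :=
  haveI : ChartedSpace (EuclideanSpace ℝ (Fin n)) (Sph n) :=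
    inferInstanceAs (ChartedSpace _ (sphere (0 : Amb n) 1))
  ChartedSpace.locallyConnectedSpace (EuclideanSpace ℝ (Fin n)) _

lemma locallyConnectedSpace_sphere_diff {n : ℕ} {K : Set (Amb n)} (hK : IsClosed K) :
    LocallyConnectedSpace ↥(Sph n \ K) := by
  refine (Topology.IsOpenEmbedding.inclusion sdiff_subset ?_).locallyConnectedSpace
  convert hK.isOpen_compl.preimage continuous_subtype_val using 1
  ext y
  simp

section SuspComponent

variable {m : ℕ}

lemma suspCoord_suspPt {x : Amb m} (hx : ‖x‖ = 1) {t : ℝ} (ht : t ∈ Ioo (0 : ℝ) 1) :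
    suspCoord (suspPt x t) = (x, t) := by
  have hr := sqrt_one_sub_sq_pos ht
  have hnorm : ‖√(1 - (2 * t - 1) ^ 2) • x‖ = √(1 - (2 * t - 1) ^ 2) := by
    rw [norm_smul, hx, mul_one, Real.norm_of_nonneg hr.le]
  simp only [suspCoord, init_suspPt, last_suspPt, hnorm, inv_smul_smul₀ hr.ne']
  congr 1
  ring

lemma openSuspSet_subset_sphere_diff {K V : Set (Amb m)} (hV : V ⊆ Sph m \ K) :
    openSuspSet V ⊆ Sph (m + 1) \ suspSet K := by
  rintro _ ⟨⟨x, t⟩, ⟨hx, ht⟩, rfl⟩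
  have hxS : ‖x‖ = 1 := by simpa [Sph] using (hV hx).1
  refine ⟨by simpa [Sph] using norm_suspPt hxS (Ioo_subset_Icc_self ht), fun hmem => ?_⟩
  obtain ⟨⟨k, s⟩, ⟨hk, hs⟩, heq⟩ := hmem
  obtain ⟨rfl, h0 | h1 | rfl⟩ := eq_of_suspPt_eq hs heq
  exacts [ht.1.ne' h0, ht.2.ne h1, (hV hx).2 hk]

lemma isClosed_suspSet {A : Set (Amb m)} (hA : IsCompact A) : IsClosed (suspSet A) :=
  ((hA.prod isCompact_Icc).image continuous_suspPt).isClosed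

lemma exists_isOpen_inter_eq_openSuspSet {K U V : Set (Amb m)} (hK : K.Nonempty)
    (hU : IsOpen U) (hUV : U ∩ (Sph m \ K) = V) :
    ∃ U' : Set (Amb (m + 1)), IsOpen U' ∧ U' ∩ (Sph (m + 1) \ suspSet K) = openSuspSet V := by
  have hV : V ⊆ Sph m \ K := hUV ▸ inter_subset_right
  refine ⟨{y | Amb.init y ≠ 0} ∩ suspCoord ⁻¹' (U ×ˢ Ioo 0 1),
    continuousOn_suspCoord.isOpen_inter_preimage
      (isOpen_ne_fun Amb.continuous_init continuous_const) (hU.prod isOpen_Ioo), ?_⟩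
  refine Subset.antisymm ?_ fun y hy => ⟨⟨?_, ?_⟩, openSuspSet_subset_sphere_diff hV hy⟩
  · rintro y ⟨⟨hy0, hyU, -⟩, hyS, hyK⟩
    obtain ⟨hx1, ht, heq⟩ := suspPt_suspCoord (by simpa [Sph] using hyS) hy0
    refine ⟨suspCoord y,
      ⟨hUV ▸ ⟨hyU, by simpa [Sph] using hx1, fun hk => hyK ?_⟩, ht⟩, heq⟩
    rw [← heq]
    exact (suspPt_mem_suspSet_iff hK (Ioo_subset_Icc_self ht)).mpr (Or.inr (Or.inr hk))
  · exact init_ne_zero_of_mem_sphere_diff hK (openSuspSet_subset_sphere_diff hV hy)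
  · obtain ⟨⟨x, t⟩, ⟨hx, ht⟩, rfl⟩ := hy
    rw [mem_preimage, suspCoord_suspPt (by simpa [Sph] using (hV hx).1) ht]
    exact ⟨(hUV ▸ hx : x ∈ U ∩ _).1, ht⟩

lemma suspSet_closure_inter_eq_openSuspSet {K V : Set (Amb m)} (hK : K.Nonempty)
    (hV : V ⊆ Sph m \ K) (hVc : closure V ∩ (Sph m \ K) ⊆ V) :
    suspSet (closure V) ∩ (Sph (m + 1) \ suspSet K) = openSuspSet V := by
  refine Subset.antisymm ?_ fun y hy => ⟨?_, openSuspSet_subset_sphere_diff hV hy⟩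
  · rintro _ ⟨⟨⟨x, t⟩, ⟨hx, ht⟩, rfl⟩, -, hyK⟩
    have hxS : x ∈ Sph m :=
      closure_minimal (hV.trans sdiff_subset) isClosed_sphere hx
    rw [suspPt_mem_suspSet_iff hK ht] at hyK
    push Not at hyK
    exact ⟨(x, t),
      ⟨hVc ⟨hx, hxS, hyK.2.2⟩, ht.1.lt_of_ne' hyK.1, ht.2.lt_of_ne hyK.2.1⟩, rfl⟩
  · obtain ⟨⟨x, t⟩, ⟨hx, ht⟩, rfl⟩ := hy
    exact ⟨(x, t), ⟨subset_closure hx, Ioo_subset_Icc_self ht⟩, rfl⟩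

lemma openSuspSet_connectedComponentIn {K : Set (Amb m)} (hKc : IsClosed K) (hK : K.Nonempty)
    {x : Amb m} (hx : x ∈ Sph m \ K) :
    openSuspSet (connectedComponentIn (Sph m \ K) x) =
      connectedComponentIn (Sph (m + 1) \ suspSet K) (suspPt x (1 / 2)) := by
  have := locallyConnectedSpace_sphere_diff hKc
  set V := connectedComponentIn (Sph m \ K) x
  have hV : V ⊆ Sph m \ K := connectedComponentIn_subset _ _
  obtain ⟨U, hU, hUV⟩ := exists_isOpen_inter_eq_connectedComponentIn (F := Sph m \ K) x
  obtain ⟨U', hU', hU'V⟩ := exists_isOpen_inter_eq_openSuspSet hK hU hUV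
  have hpre : IsPreconnected (openSuspSet V) :=
    (isPreconnected_connectedComponentIn.prod isPreconnected_Ioo).image _
      continuous_suspPt.continuousOn
  have hclosed : IsClosed (suspSet (closure V)) :=
    isClosed_suspSet ((isCompact_sphere 0 1).of_isClosed_subset isClosed_closure
      (closure_minimal (hV.trans sdiff_subset) isClosed_sphere))
  refine (connectedComponentIn_eq_of_isPreconnected hpre (openSuspSet_subset_sphere_diff hV)
    ⟨(x, 1 / 2), ⟨mem_connectedComponentIn hx, by norm_num⟩, rfl⟩ hU' hclosed hU'V
    (suspSet_closure_inter_eq_openSuspSet hK hV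
      (closure_connectedComponentIn_inter_subset _ _))).symm

lemma exists_embedding_suspSet {k : ℕ} {A : Set (Amb (k + 1))}
    (he : ∃ e : Sph k → Amb (k + 1), Continuous e ∧ Function.Injective e ∧ range e = A) :
    ∃ E : Sph (k + 1) → Amb (k + 2),
      Continuous E ∧ Function.Injective E ∧ range E = suspSet A := by
  obtain ⟨e, he, hinj, rfl⟩ := he
  let toSusp : Sph (k + 1) ≃ₜ Susp (Sph k) :=
    (Homeomorph.setCongr suspSet_sphere.symm).trans (suspHomeo _ (isCompact_sphere 0 1)).symm
  refine ⟨suspRealize (range e) ∘ Susp.map (rangeFactorization e) ∘ toSusp, ?_, ?_, ?_⟩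
  · exact (continuous_suspRealize _).comp
      ((Susp.continuous_map (he.subtype_mk _)).comp toSusp.continuous)
  · exact (suspRealize_injective _).comp
      ((Susp.map_injective (rangeFactorization_injective.mpr hinj)).comp toSusp.injective)
  · rw [range_comp, ((Susp.map_surjective rangeFactorization_surjective).comp
      toSusp.surjective).range_eq, image_univ, range_suspRealize]

end SuspComponent

namespace CrumpledCube

section Basic

variable {n : ℕ} (C : CrumpledCube n)

lemma isCompact_bd : IsCompact C.bd := by
  obtain ⟨e, he, -, hr⟩ := C.exists_embedding
  have : CompactSpace (Sph (n - 1)) := isCompact_iff_compactSpace.mp (isCompact_sphere 0 1)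
  exact hr ▸ isCompact_range he

lemma bd_nonempty : C.bd.Nonempty := by
  obtain ⟨e, -, -, hr⟩ := C.exists_embedding
  have : Nonempty (Sph (n - 1)) := (NormedSpace.sphere_nonempty.mpr zero_le_one).to_subtype
  exact hr ▸ range_nonempty e

lemma int_subset : C.int ⊆ Sph n \ C.bd := by
  obtain ⟨x, -, hx⟩ := C.int_component
  exact hx ▸ connectedComponentIn_subset _ _

lemma carrier_subset_sphere : C.carrier ⊆ Sph n :=
  union_subset C.bd_subset_sphere (C.int_subset.trans sdiff_subset)

lemma isCompact_carrier : IsCompact C.carrier := by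
  refine (isCompact_sphere 0 1).of_isClosed_subset
    (isClosed_of_closure_subset fun y hy => ?_) C.carrier_subset_sphere
  rw [carrier, closure_union, C.isCompact_bd.isClosed.closure_eq] at hy
  by_cases hyb : y ∈ C.bd
  · exact Or.inl hyb
  have hyi := hy.resolve_left hyb
  have hyS : y ∈ Sph n := closure_minimal (C.int_subset.trans sdiff_subset) isClosed_sphere hyi
  obtain ⟨x, -, hx⟩ := C.int_component
  rw [hx] at hyi
  exact Or.inr (hx ▸ closure_connectedComponentIn_inter_subset _ x ⟨hyi, hyS, hyb⟩)

end Basic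

variable {k : ℕ} (C : CrumpledCube (k + 1))

def susp : CrumpledCube (k + 2) where
  bd := suspSet C.bd
  int := openSuspSet C.int
  bd_subset_sphere := suspSet_subset_sphere C.bd_subset_sphere
  exists_embedding := exists_embedding_suspSet C.exists_embedding
  int_component := by
    obtain ⟨x, hx, hint⟩ := C.int_component
    refine ⟨suspPt x (1 / 2), openSuspSet_subset_sphere_diff C.int_subset
      ⟨(x, 1 / 2), ⟨hint ▸ mem_connectedComponentIn hx, by norm_num⟩, rfl⟩, ?_⟩
    rw [hint]
    exact openSuspSet_connectedComponentIn C.isCompact_bd.isClosed C.bd_nonempty hx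

lemma susp_carrier : C.susp.carrier = suspSet C.carrier :=
  (suspSet_union C.bd_nonempty C.int).symm

def suspCarrierHomeo : Susp C.carrier ≃ₜ C.susp.carrier :=
  (suspHomeo C.carrier C.isCompact_carrier).trans (Homeomorph.setCongr C.susp_carrier.symm)

def suspBdHomeo : Susp C.bd ≃ₜ C.susp.bd := suspHomeo C.bd C.isCompact_bd

lemma coe_suspCarrierHomeo_map_inclusion (z : Susp C.bd) :
    (C.suspCarrierHomeo (Susp.map (inclusion C.bd_subset_carrier) z) : Amb (k + 2)) =
      C.suspBdHomeo z :=
  suspRealize_map_inclusion _ z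

lemma image_suspCarrierHomeo_range_map_inclusion :
    C.suspCarrierHomeo '' range (Susp.map (inclusion C.bd_subset_carrier)) =
      {y : C.susp.carrier | (y : Amb (k + 2)) ∈ C.susp.bd} := by
  ext y
  constructor
  · rintro ⟨_, ⟨z, rfl⟩, rfl⟩
    rw [mem_ofPred_eq, coe_suspCarrierHomeo_map_inclusion]
    exact (C.suspBdHomeo z).2
  · intro hy
    refine ⟨_, ⟨C.suspBdHomeo.symm ⟨y, hy⟩, rfl⟩, Subtype.ext ?_⟩
    rw [coe_suspCarrierHomeo_map_inclusion, Homeomorph.apply_symm_apply]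

end CrumpledCube

section SuspTriple

variable {k : ℕ} {C D : CrumpledCube (k + 1)}

def suspBdMap (h : C.bd ≃ₜ D.bd) : C.susp.bd ≃ₜ D.susp.bd :=
  C.suspBdHomeo.symm.trans (h.suspCongr.trans D.suspBdHomeo)

lemma suspBdMap_apply (h : C.bd ≃ₜ D.bd) (z : Susp C.bd)
    (hz : (C.suspCarrierHomeo (Susp.map (inclusion C.bd_subset_carrier) z) : Amb (k + 2)) ∈
      C.susp.bd) :
    (suspBdMap h ⟨_, hz⟩ : Amb (k + 2)) =
      D.suspCarrierHomeo (Susp.map (inclusion D.bd_subset_carrier) (Susp.map h z)) := by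
  have hz' : (⟨_, hz⟩ : C.susp.bd) = C.suspBdHomeo z :=
    Subtype.ext (C.coe_suspCarrierHomeo_map_inclusion z)
  rw [hz', CrumpledCube.coe_suspCarrierHomeo_map_inclusion, suspBdMap, Homeomorph.trans_apply,
    Homeomorph.symm_apply_apply, Homeomorph.trans_apply]
  rfl

lemma MemW.susp {h : C.bd ≃ₜ D.bd} (hW : MemW C D h) : MemW C.susp D.susp (suspBdMap h) := by
  obtain ⟨f, hf, hfh, hfbd⟩ := hW
  refine ⟨D.suspCarrierHomeo ∘ Susp.map f ∘ C.suspCarrierHomeo.symm,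
    D.suspCarrierHomeo.continuous.comp
      ((Susp.continuous_map hf).comp C.suspCarrierHomeo.symm.continuous), ?_, ?_⟩
  · intro y hy
    have hy' : y ∈ C.suspCarrierHomeo '' range (Susp.map (inclusion C.bd_subset_carrier)) := by
      rw [C.image_suspCarrierHomeo_range_map_inclusion]
      exact hy
    obtain ⟨_, ⟨z, rfl⟩, rfl⟩ := hy'
    have hfi : f ∘ inclusion C.bd_subset_carrier = inclusion D.bd_subset_carrier ∘ h :=
      funext fun x => Subtype.ext (hfh (inclusion _ x) x.2)
    rw [suspBdMap_apply, Function.comp_apply, Function.comp_apply, Homeomorph.symm_apply_apply,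
      Susp.map_map, hfi, ← Susp.map_map]
  · intro y
    obtain ⟨z, rfl⟩ := C.suspCarrierHomeo.surjective y
    rw [Function.comp_apply, Function.comp_apply, Homeomorph.symm_apply_apply]
    induction z using Quot.ind with | mk p => ?_
    change suspPt _ _ ∈ suspSet D.bd ↔ suspPt _ _ ∈ suspSet C.bd
    rw [suspPt_mem_suspSet_iff D.bd_nonempty p.2.2, suspPt_mem_suspSet_iff C.bd_nonempty p.2.2,
      hfbd]

end SuspTriple

/-- **Theorem 4.1.** If `(C,D,h) ∈ 𝒲_n`, then the suspensions of `C` and `D` are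
crumpled `(n+1)`-cubes `C'`, `D'` and the suspension of `h` induces a boundary
homeomorphism `h'` with `(C', D', h') ∈ 𝒲_{n+1}`. -/
theorem stmt9 (n : ℕ) (hn : 2 ≤ n) (C D : CrumpledCube n) (h : ↥C.bd ≃ₜ ↥D.bd)
    (hW : MemW C D h) :
    ∃ (C' D' : CrumpledCube (n + 1))
      (φ : Susp ↥C.carrier ≃ₜ ↥C'.carrier) (ψ : Susp ↥D.carrier ≃ₜ ↥D'.carrier),
      (⇑φ '' Set.range (Susp.map
          (fun x : ↥C.bd => (⟨(x : Amb n), C.bd_subset_carrier x.2⟩ : ↥C.carrier)))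
        = {y : ↥C'.carrier | (y : Amb (n + 1)) ∈ C'.bd}) ∧
      (⇑ψ '' Set.range (Susp.map
          (fun y : ↥D.bd => (⟨(y : Amb n), D.bd_subset_carrier y.2⟩ : ↥D.carrier)))
        = {y : ↥D'.carrier | (y : Amb (n + 1)) ∈ D'.bd}) ∧
      ∃ h' : ↥C'.bd ≃ₜ ↥D'.bd,
        MemW C' D' h' ∧
        ∀ (z : Susp ↥C.bd)
          (hz : ((φ (Susp.map
              (fun x : ↥C.bd => (⟨(x : Amb n), C.bd_subset_carrier x.2⟩ : ↥C.carrier)) z) :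
                ↥C'.carrier) : Amb (n + 1)) ∈ C'.bd),
          ((h' ⟨_, hz⟩ : ↥D'.bd) : Amb (n + 1)) =
            ((ψ (Susp.map
                (fun y : ↥D.bd => (⟨(y : Amb n), D.bd_subset_carrier y.2⟩ : ↥D.carrier))
                (Susp.map (fun x : ↥C.bd => h x) z)) : ↥D'.carrier) : Amb (n + 1)) := by
  obtain ⟨k, rfl⟩ : ∃ k, n = k + 1 := ⟨n - 1, by omega⟩
  exact ⟨C.susp, D.susp, C.suspCarrierHomeo, D.suspCarrierHomeo,
    C.image_suspCarrierHomeo_range_map_inclusion, D.image_suspCarrierHomeo_range_map_inclusion,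
    suspBdMap h, hW.susp, suspBdMap_apply h⟩
end
end

section
/- Let n ≥ 5. If (C,D,h) ∈ W_n and the sewing space C ∪_h D is homeomorphic to S^n, then D contains disjoint homotopy taming sets: there exist subsets T and T′ of Bd D, each a homotopy taming set for D, with T ∩ T′ = ∅. (Theorem on disjoint homotopy taming sets, Section 6) -/
/-!
An associated map `f : C → D` folds the sewing `C ∪_h D ≅ Sⁿ` onto `D` by a retraction `ρ` that
is injective over `Bd D`. So if `S ⊆ Sⁿ` is such that every singular disk `I² → Sⁿ` can be moved
into `S` by an arbitrarily small perturbation, the points of `Bd D` lying in `S` form a homotopy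
taming set of `D`: approximate a disk `m` in `D` within `Sⁿ` by a disk in `S`, then apply `ρ`.
Two disjoint such sets exist by general position, as `2 + 2 + 1 < n + 1`: perturb the terms of a
dense sequence of disks one at a time, each the radial projection of a small translate of a `C¹`
map that misses the cones over all earlier disks (their union has Hausdorff dimension `≤ 5`);
the even-indexed disks sweep out `S`, the odd-indexed ones `S'`.
-/

noncomputable section

open Metric Set unitInterval

/-- The identifications defining the sewing of two crumpled cubes along a boundary
homeomorphism `θ`. -/
def SewRel {n : ℕ} (C D : CrumpledCube n) (θ : ↥C.bd ≃ₜ ↥D.bd) :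
    (↥C.carrier ⊕ ↥D.carrier) → (↥C.carrier ⊕ ↥D.carrier) → Prop := fun a b =>
  a = b ∨ ∃ x : ↥C.bd,
    (a = Sum.inl ⟨(x : Amb n), C.bd_subset_carrier x.2⟩ ∧
      b = Sum.inr ⟨((θ x : ↥D.bd) : Amb n), D.bd_subset_carrier (θ x).2⟩) ∨
    (b = Sum.inl ⟨(x : Amb n), C.bd_subset_carrier x.2⟩ ∧
      a = Sum.inr ⟨((θ x : ↥D.bd) : Amb n), D.bd_subset_carrier (θ x).2⟩)

/-- The sewing space `C ∪_θ D`. -/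
def Sewing {n : ℕ} (C D : CrumpledCube n) (θ : ↥C.bd ≃ₜ ↥D.bd) : Type _ :=
  Quot (SewRel C D θ)

instance {n : ℕ} (C D : CrumpledCube n) (θ : ↥C.bd ≃ₜ ↥D.bd) :
    TopologicalSpace (Sewing C D θ) :=
  inferInstanceAs (TopologicalSpace (Quot (SewRel C D θ)))

open Module

section GeneralPosition

variable {E : Type*} [NormedAddCommGroup E] [NormedSpace ℝ E]

theorem exists_norm_lt_forall_add_ne_smul [FiniteDimensional ℝ E] {F : Type*}
    [NormedAddCommGroup F] [NormedSpace ℝ F] [FiniteDimensional ℝ F]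
    (hdim : 2 * finrank ℝ F + 1 < finrank ℝ E)
    {Q : F → E} (hQ : ContDiff ℝ 1 Q) {ι : Type*} [Countable ι] {U : ι → F → E}
    (hU : ∀ i, ContDiff ℝ 1 (U i)) {η : ℝ} (hη : 0 < η) :
    ∃ v : E, ‖v‖ < η ∧ ∀ i y y' (t : ℝ), Q y + v ≠ t • U i y' := by
  set Φ : ι → ℝ × F × F → E := fun i z => z.1 • U i z.2.2 - Q z.2.1
  have hΦ : ∀ i, ContDiff ℝ 1 (Φ i) := fun i =>
    (contDiff_fst.smul ((hU i).comp (contDiff_snd.comp contDiff_snd))).sub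
      (hQ.comp (contDiff_fst.comp contDiff_snd))
  have hdimH : dimH (⋃ i, range (Φ i)) < finrank ℝ E := by
    rw [dimH_iUnion]
    refine (iSup_le fun i => (hΦ i).dimH_range_le).trans_lt ?_
    simp only [finrank_prod, finrank_self]
    exact_mod_cast (by omega : 1 + (finrank ℝ F + finrank ℝ F) < finrank ℝ E)
  obtain ⟨v, hv, hvΦ⟩ := (dense_compl_of_dimH_lt_finrank hdimH).inter_open_nonempty (ball 0 η)
    isOpen_ball ⟨0, mem_ball_self hη⟩
  refine ⟨v, mem_ball_zero_iff.1 hv, fun i y y' t hyt => hvΦ (mem_iUnion.2 ⟨i, (t, y, y'), ?_⟩)⟩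
  simp [Φ, ← hyt]

theorem exists_contDiff_near_on_square (p : C(I × I, E)) {δ : ℝ} (hδ : 0 < δ) :
    ∃ Q : ℝ × ℝ → E, ContDiff ℝ 1 Q ∧ ∀ x : I × I, dist (Q (x.1, x.2)) (p x) < δ := by
  have hp : Continuous fun y : ℝ × ℝ =>
      p (projIcc 0 1 zero_le_one y.1, projIcc 0 1 zero_le_one y.2) := by fun_prop
  obtain ⟨Q, hQ, hQp, -⟩ := hp.exists_contDiff_approx 1 continuous_const fun _ => hδ
  exact ⟨Q, hQ, fun x => by simpa using hQp (x.1, x.2)⟩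

theorem norm_inv_norm_smul_sub_le {u p : E} (hp : ‖p‖ = 1) : ‖‖u‖⁻¹ • u - p‖ ≤ 2 * ‖u - p‖ := by
  rcases eq_or_ne u 0 with rfl | hu
  · simp [hp]
  have hradial : ‖‖u‖⁻¹ • u - u‖ ≤ ‖u - p‖ := by
    have hcoef : (‖u‖⁻¹ - 1) * ‖u‖ = ‖p‖ - ‖u‖ := by
      rw [hp, sub_mul, inv_mul_cancel₀ (norm_ne_zero_iff.2 hu), one_mul]
    rw [show ‖u‖⁻¹ • u - u = (‖u‖⁻¹ - 1) • u by rw [sub_smul, one_smul], norm_smul,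
      Real.norm_eq_abs, ← abs_norm u, ← abs_mul, abs_norm, hcoef, norm_sub_rev]
    exact abs_norm_sub_norm_le p u
  calc ‖‖u‖⁻¹ • u - p‖ ≤ ‖‖u‖⁻¹ • u - u‖ + ‖u - p‖ := norm_sub_le_norm_sub_add_norm_sub _ _ _
    _ ≤ 2 * ‖u - p‖ := by linarith

def IsRadialOfContDiff (ν : I × I → E) : Prop :=
  ∃ U : ℝ × ℝ → E, ContDiff ℝ 1 U ∧ ∀ x : I × I, ν x = ‖U (x.1, x.2)‖⁻¹ • U (x.1, x.2)

theorem exists_radialOfContDiff_near_disjoint [FiniteDimensional ℝ E]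
    (hE : 5 < finrank ℝ E) (p : C(I × I, sphere (0 : E) 1)) {ε : ℝ} (hε : 0 < ε)
    (L : List C(I × I, sphere (0 : E) 1)) :
    ∃ μ : C(I × I, sphere (0 : E) 1), dist μ p < ε ∧ IsRadialOfContDiff (fun x => (μ x : E)) ∧
      ∀ ν ∈ L, IsRadialOfContDiff (fun x => (ν x : E)) → Disjoint (range ν) (range μ) := by
  set δ := min ε 1 / 4 with hδ
  have hδ0 : 0 < δ := by positivity
  obtain ⟨Q, hQ, hQp⟩ := exists_contDiff_near_on_square ⟨fun x => (p x : E), by fun_prop⟩ hδ0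
  let good : Set C(I × I, sphere (0 : E) 1) :=
    {ν | ν ∈ L ∧ IsRadialOfContDiff (fun x => (ν x : E))}
  have : Countable good := (L.finite_toSet.subset fun _ hν => hν.1).countable.to_subtype
  choose U hU hνU using fun ν : good => ν.2.2
  obtain ⟨v, hv, hvU⟩ := exists_norm_lt_forall_add_ne_smul (F := ℝ × ℝ)
    (by simpa using hE) hQ hU hδ0
  set u : I × I → E := fun x => Q (x.1, x.2) + v with hu
  have hup : ∀ x, ‖u x - p x‖ < 2 * δ := fun x => by
    calc ‖u x - p x‖ ≤ ‖Q (x.1, x.2) - p x‖ + ‖v‖ := by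
          rw [hu, add_sub_right_comm]; exact norm_add_le _ _
      _ < δ + δ := add_lt_add (by simpa [dist_eq_norm] using hQp x) hv
      _ = 2 * δ := by ring
  have hu0 : ∀ x, u x ≠ 0 := fun x hx => by
    have := hup x
    rw [hx, zero_sub, norm_neg, norm_eq_of_mem_sphere] at this
    linarith [min_le_right ε 1]
  have hu_cont : Continuous u := by fun_prop
  have hμ_cont : Continuous fun x => ‖u x‖⁻¹ • u x :=
    (hu_cont.norm.inv₀ fun x => norm_ne_zero_iff.2 (hu0 x)).smul hu_cont
  have hμ_mem : ∀ x, ‖u x‖⁻¹ • u x ∈ sphere (0 : E) 1 := fun x => by simp [norm_smul, hu0 x]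
  let μ : C(I × I, sphere (0 : E) 1) := ⟨fun x => ⟨_, hμ_mem x⟩, hμ_cont.subtype_mk hμ_mem⟩
  refine ⟨μ, ?_, ⟨fun y => Q y + v, hQ.add contDiff_const, fun x => rfl⟩, ?_⟩
  · rw [ContinuousMap.dist_lt_iff hε]
    intro x
    calc dist (μ x) (p x) = ‖‖u x‖⁻¹ • u x - p x‖ := dist_eq_norm _ _
      _ ≤ 2 * ‖u x - p x‖ := norm_inv_norm_smul_sub_le (norm_eq_of_mem_sphere (p x))
      _ < 4 * δ := by linarith [hup x]
      _ ≤ ε := by linarith [min_le_left ε 1]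
  · intro ν hν hνU'
    rw [Set.disjoint_left]
    rintro _ ⟨x', rfl⟩ ⟨x, hx⟩
    refine hvU ⟨ν, hν, hνU'⟩ (x.1, x.2) (x'.1, x'.2)
      (‖u x‖ * ‖U ⟨ν, hν, hνU'⟩ (x'.1, x'.2)‖⁻¹) ?_
    calc u x = ‖u x‖ • (μ x : E) := by
          rw [show (μ x : E) = ‖u x‖⁻¹ • u x from rfl, smul_smul,
            mul_inv_cancel₀ (norm_ne_zero_iff.2 (hu0 x)), one_smul]
      _ = ‖u x‖ • (ν x' : E) := by rw [hx]
      _ = _ := by rw [mul_smul]; exact congrArg _ (hνU ⟨ν, hν, hνU'⟩ x')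

end GeneralPosition

theorem exists_seq_of_forall_list_exists {Y : Type*} (Q : ℕ → Y → Prop) (R : Y → Y → Prop)
    (h : ∀ k (L : List Y), ∃ y, Q k y ∧ ∀ x ∈ L, R x y) :
    ∃ ν : ℕ → Y, (∀ k, Q k (ν k)) ∧ ∀ j k, j < k → R (ν j) (ν k) := by
  choose next hQ hR using h
  let pre : ℕ → List Y := fun k => Nat.rec [] (fun k L => L ++ [next k L]) k
  have hpre : ∀ j k, j < k → next j (pre j) ∈ pre k := by
    intro j k hjk
    induction k with
    | zero => omega
    | succ k ih =>
      rcases Nat.lt_succ_iff_lt_or_eq.1 hjk with hjk | rfl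
      · exact List.mem_append_left _ (ih hjk)
      · exact List.mem_append_right _ (List.mem_singleton_self _)
  exact ⟨fun k => next k (pre k), fun k => hQ _ _, fun j k hjk => hR _ _ _ (hpre j k hjk)⟩

theorem exists_seq_denseRange_even_odd {Y : Type*} [PseudoMetricSpace Y]
    [TopologicalSpace.SeparableSpace Y] [Nonempty Y] (P : Y → Prop) (R : Y → Y → Prop)
    (h : ∀ y ε, 0 < ε → ∀ L : List Y, ∃ z, dist z y < ε ∧ P z ∧ ∀ x ∈ L, P x → R x z) :
    ∃ ν : ℕ → Y, (∀ j k, j < k → R (ν j) (ν k)) ∧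
      DenseRange (fun k => ν (2 * k)) ∧ DenseRange (fun k => ν (2 * k + 1)) := by
  set d := TopologicalSpace.denseSeq Y
  -- step `k` approximates `d i` to within `1 / (m + 1)`, where `(i, m)` is decoded from `k / 2`
  obtain ⟨ν, hνd, hνR⟩ := exists_seq_of_forall_list_exists
    (fun k z => dist z (d (k / 2).unpair.1) < 1 / ((k / 2).unpair.2 + 1) ∧ P z)
    (fun x z => P x → R x z) fun k L => by
      obtain ⟨z, hz, hPz, hRz⟩ := h (d (k / 2).unpair.1) _ Nat.one_div_pos_of_nat L
      exact ⟨z, ⟨hz, hPz⟩, hRz⟩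
  have hdense : ∀ r < 2, DenseRange fun k => ν (2 * k + r) := by
    intro r hr
    refine Metric.denseRange_iff.2 fun y δ hδ => ?_
    obtain ⟨i, hi⟩ :=
      Metric.denseRange_iff.1 (TopologicalSpace.denseRange_denseSeq Y) y (δ / 2) (half_pos hδ)
    obtain ⟨m, hm⟩ := exists_nat_one_div_lt (half_pos hδ)
    have hk : (2 * Nat.pair i m + r) / 2 = Nat.pair i m := by omega
    have hνk := (hνd (2 * Nat.pair i m + r)).1
    rw [hk, Nat.unpair_pair] at hνk
    refine ⟨Nat.pair i m, ?_⟩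
    calc dist y (ν _) ≤ dist y (d i) + dist (ν _) (d i) := dist_triangle_right _ _ _
      _ < δ / 2 + δ / 2 := add_lt_add hi (hνk.trans hm)
      _ = δ := add_halves δ
  exact ⟨ν, fun j k hjk => hνR j k hjk (hνd j).2, hdense 0 (by norm_num), hdense 1 (by norm_num)⟩

def DiskDense {X : Type*} [TopologicalSpace X] (S : Set X) : Prop :=
  Dense {μ : C(I × I, X) | range μ ⊆ S}

theorem DenseRange.diskDense_iUnion_range {X : Type*} [TopologicalSpace X] {ν : ℕ → C(I × I, X)}
    (hν : DenseRange ν) : DiskDense (⋃ k, range (ν k)) :=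
  hν.mono <| range_subset_iff.2 fun k => subset_iUnion (fun k => range (ν k)) k

theorem exists_disjoint_diskDense_sphere {E : Type*} [NormedAddCommGroup E] [NormedSpace ℝ E]
    [FiniteDimensional ℝ E] (hE : 5 < finrank ℝ E) :
    ∃ S S' : Set (sphere (0 : E) 1), DiskDense S ∧ DiskDense S' ∧ Disjoint S S' := by
  have : Nontrivial E := Module.nontrivial_of_finrank_pos (R := ℝ) (by omega)
  obtain ⟨e, he⟩ := (NormedSpace.sphere_nonempty (x := (0 : E))).2 zero_le_one
  have : Nonempty C(I × I, sphere (0 : E) 1) := ⟨ContinuousMap.const _ ⟨e, he⟩⟩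
  obtain ⟨ν, hν, heven, hodd⟩ := exists_seq_denseRange_even_odd
    (fun μ : C(I × I, sphere (0 : E) 1) => IsRadialOfContDiff fun x => (μ x : E))
    (fun μ μ' => Disjoint (range μ) (range μ'))
    fun p ε hε L => exists_radialOfContDiff_near_disjoint hE p hε L
  refine ⟨_, _, heven.diskDense_iUnion_range, hodd.diskDense_iUnion_range, ?_⟩
  refine disjoint_iUnion_left.2 fun j => disjoint_iUnion_right.2 fun k => ?_
  rcases lt_or_gt_of_ne (show 2 * j ≠ 2 * k + 1 by omega) with hjk | hjk
  · exact hν _ _ hjk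
  · exact (hν _ _ hjk).symm

namespace Sewing

variable {n : ℕ} {C D : CrumpledCube n} {θ : ↥C.bd ≃ₜ ↥D.bd}

def inr (p : ↥D.carrier) : Sewing C D θ := Quot.mk _ (Sum.inr p)

theorem continuous_inr : Continuous (inr : ↥D.carrier → Sewing C D θ) :=
  continuous_quot_mk.comp _root_.continuous_inr

/-- The fold is injective over `Bd D` because `f⁻¹(Bd D) = Bd C`, which is glued to `Bd D`. -/
theorem exists_fold_of_memW (hW : MemW C D θ) :
    ∃ ρ : Sewing C D θ → ↥D.carrier, Continuous ρ ∧ (∀ p, ρ (inr p) = p) ∧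
      ∀ z, (ρ z : Amb n) ∈ D.bd → inr (ρ z) = z := by
  obtain ⟨f, hf, hfθ, hfbd⟩ := hW
  have hcompat : ∀ a b, SewRel C D θ a b → Sum.elim f id a = Sum.elim f id b := by
    rintro a b (rfl | ⟨x, ⟨rfl, rfl⟩ | ⟨rfl, rfl⟩⟩)
    · rfl
    · exact Subtype.ext (hfθ _ x.2)
    · exact (Subtype.ext (hfθ _ x.2)).symm
  refine ⟨Quot.lift _ hcompat, continuous_quot_lift _ (hf.sumElim continuous_id), fun _ => rfl, ?_⟩
  rintro ⟨c | p⟩ hc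
  · exact Quot.sound <| Or.inr ⟨⟨c, (hfbd c).1 hc⟩, Or.inr ⟨rfl, congrArg Sum.inr
      (Subtype.ext (hfθ c ((hfbd c).1 hc)))⟩⟩
  · rfl

end Sewing

theorem isHomotopyTamingSet_of_retraction {n : ℕ} (D : CrumpledCube n) {X : Type*}
    [MetricSpace X] [CompactSpace X] {ι : ↥D.carrier → X} (hι : Continuous ι) {ρ : X → ↥D.carrier}
    (hρ : Continuous ρ) (hρι : ∀ p, ρ (ι p) = p) (hιρ : ∀ y, (ρ y : Amb n) ∈ D.bd → ι (ρ y) = y)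
    {S : Set X} (hS : DiskDense S) :
    IsHomotopyTamingSet D (Subtype.val '' {p | (p : Amb n) ∈ D.bd ∧ ι p ∈ S}) := by
  refine ⟨image_subset_iff.2 fun p hp => hp.1, fun m ε hε => ?_⟩
  obtain ⟨δ, hδ, hρδ⟩ :=
    Metric.uniformContinuous_iff.1 (CompactSpace.uniformContinuous_of_continuous hρ) ε hε
  obtain ⟨μ, hμS, hμ⟩ := hS.exists_dist_lt (⟨ι ∘ m, hι.comp m.continuous⟩ : C(I × I, X)) hδ
  refine ⟨⟨ρ ∘ μ, hρ.comp μ.continuous⟩, fun x => ?_, fun x => ?_⟩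
  · simpa [hρι] using hρδ ((ContinuousMap.dist_apply_le_dist x).trans_lt hμ)
  · by_cases hx : (ρ (μ x) : Amb n) ∈ D.bd
    · exact Or.inl ⟨ρ (μ x), ⟨hx, (hιρ _ hx).symm ▸ hμS ⟨x, rfl⟩⟩, rfl⟩
    · exact Or.inr ((ρ (μ x)).2.resolve_left hx)

/-- **Theorem 6.5.** Let `n ≥ 5`. If `(C,D,h) ∈ 𝒲_n` and `C ∪_h D = Sⁿ`, then `D`
contains disjoint homotopy taming sets. -/
theorem stmt19 (n : ℕ) (hn : 5 ≤ n) (C D : CrumpledCube n) (h : ↥C.bd ≃ₜ ↥D.bd)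
    (hW : MemW C D h) (hsew : Nonempty (Sewing C D h ≃ₜ ↥(Sph n))) :
    ∃ T T' : Set (Amb n),
      IsHomotopyTamingSet D T ∧ IsHomotopyTamingSet D T' ∧ T ∩ T' = ∅ := by
  obtain ⟨g⟩ := hsew
  obtain ⟨ρ, hρ, hρι, hιρ⟩ := Sewing.exists_fold_of_memW hW
  obtain ⟨S, S', hS, hS', hSS'⟩ :=
    exists_disjoint_diskDense_sphere (E := Amb n) (by simpa using (by omega : 5 < n + 1))
  let ι : ↥D.carrier → sphere (0 : Amb n) 1 := fun p => g (Sewing.inr p)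
  have hι : Continuous ι := g.continuous.comp Sewing.continuous_inr
  have hρ' : Continuous fun y => ρ (g.symm y) := hρ.comp g.symm.continuous
  have hρι' : ∀ p, ρ (g.symm (ι p)) = p := fun p => by simp [ι, hρι]
  have hιρ' : ∀ y, (ρ (g.symm y) : Amb n) ∈ D.bd → ι (ρ (g.symm y)) = y := fun y hy =>
    (congrArg g (hιρ _ hy)).trans (g.apply_symm_apply y)
  refine ⟨_, _, isHomotopyTamingSet_of_retraction D hι hρ' hρι' hιρ' hS,
    isHomotopyTamingSet_of_retraction D hι hρ' hρι' hιρ' hS', ?_⟩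
  rw [← disjoint_iff_inter_eq_empty, disjoint_image_iff Subtype.val_injective]
  exact (hSS'.preimage ι).mono (fun _ hp => hp.2) fun _ hp => hp.2
end
end
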